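/- Let α > 1 and β > 0, let φ be an analytic self-map of the open unit disk D, and let g be analytic on D. Then the operator C_φV_g, defined by (C_φV_g f)(z) = ∫₀^{φ(z)} f'(ξ) g(ξ) dξ, is bounded from Z^α to Z^β if and only if sup_{z∈D} (1−|z|²)^β |g(φ(z)) (φ'(z))²| / (1−|φ(z)|²)^α < ∞ and sup_{z∈D} (1−|z|²)^β |g'(φ(z))(φ'(z))² + g(φ(z))φ''(z)| / (1−|φ(z)|²)^{α−1} < ∞. -/

import Mathlib

noncomputable section

/-- The open unit disk in the complex plane. -/
def uD : Set ℂ := Metric.ball 0 1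

/-- The Zygmund-type quantity `(1-|z|^2)^a * |f''(z)|`. -/
def zygS (a : ℝ) (f : ℂ → ℂ) (z : ℂ) : ℝ := (1 - ‖z‖ ^ 2) ^ a * ‖deriv (deriv f) z‖

/-- Membership in the Zygmund-type space `Z^a`. -/
def memZ (a : ℝ) (f : ℂ → ℂ) : Prop :=
  AnalyticOn ℂ f uD ∧ ∃ M : ℝ, ∀ z ∈ uD, zygS a f z ≤ M

/-- The Zygmund-type norm `‖f‖_{Z^a} = |f 0| + |f' 0| + sup_{z ∈ D} (1-|z|^2)^a |f''(z)|`. -/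
def zNorm (a : ℝ) (f : ℂ → ℂ) : ℝ := ‖f 0‖ + ‖deriv f 0‖ + sSup (zygS a f '' uD)

/-- Membership in the weighted space `H^∞_{v_b}` (for `u` analytic on `uD`). -/
def memHv (b : ℝ) (u : ℂ → ℂ) : Prop :=
  ∃ M : ℝ, ∀ z ∈ uD, (1 - ‖z‖ ^ 2) ^ b * ‖u z‖ ≤ M

/-- `T` is a bounded operator from `Z^a` to `Z^b`. -/
def boundedOp (a b : ℝ) (T : (ℂ → ℂ) → ℂ → ℂ) : Prop :=
  (∀ f, memZ a f → memZ b (T f)) ∧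
    ∃ C > 0, ∀ f, memZ a f → zNorm b (T f) ≤ C * zNorm a f

/-- `(C_φ V_g f)(z) = ∫₀^{φ(z)} f'(ξ) g(ξ) dξ`, parametrized along the segment from `0` to `φ z`. -/
def CphiVg (g φ : ℂ → ℂ) (f : ℂ → ℂ) : ℂ → ℂ :=
  fun z => ∫ t in (0:ℝ)..1, φ z * (deriv f ((t : ℂ) * φ z) * g ((t : ℂ) * φ z))

/-!
Write `A = (g ∘ φ) φ'²` and `B = (g' ∘ φ) φ'² + (g ∘ φ) φ''`. Since `C_φ V_g f = F ∘ φ - F 0` for a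
primitive `F` of `f' g`, we have `(C_φ V_g f)'' = (f'' ∘ φ) A + (f' ∘ φ) B`. For `f ∈ Z^α`,
`|f''(w)| ≤ ‖f‖ (1 - |w|²)^(-α)`, and integrating along the radius gives
`|f'(w)| ≲ ‖f‖ (1 - |w|²)^(1 - α)` because `α > 1`; this proves sufficiency.

For necessity, the test functions `z` and `z² / 2` bound the weighted `A` and `B` uniformly,
which settles the points where `|φ z| ≤ 1/2`. Near the boundary we test with the kernels
`(1 - w̄ ζ)^(-c)`, `w = φ z`, `c = α, α + 1`, whose `Z^α`-norm is `≲ (1 - |w|²)^(α - c - 2)`: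
the two resulting estimates form an invertible linear system in `A` and `B`, which bounds each.
-/

open Set Metric Filter ComplexConjugate

lemma isOpen_uD : IsOpen uD := isOpen_ball

lemma mem_uD {z : ℂ} : z ∈ uD ↔ ‖z‖ < 1 := mem_ball_zero_iff

lemma zero_mem_uD : (0 : ℂ) ∈ uD := mem_uD.2 (by norm_num)

lemma one_sub_norm_sq_pos {z : ℂ} (hz : z ∈ uD) : 0 < 1 - ‖z‖ ^ 2 := by
  have := mem_uD.1 hz
  nlinarith [norm_nonneg z]

lemma ofReal_mul_mem_uD {z : ℂ} (hz : z ∈ uD) {t : ℝ} (ht : t ∈ Icc (0 : ℝ) 1) :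
    (t : ℂ) * z ∈ uD := by
  rw [mem_uD, norm_mul, Complex.norm_real, Real.norm_of_nonneg ht.1]
  nlinarith [mem_uD.1 hz, norm_nonneg z, ht.2]

section ZygmundNorm

variable {a : ℝ} {f : ℂ → ℂ}

lemma memZ.analyticOnNhd (hf : memZ a f) : AnalyticOnNhd ℂ f uD :=
  isOpen_uD.analyticOn_iff_analyticOnNhd.1 hf.1

lemma zygS_nonneg (a : ℝ) (f : ℂ → ℂ) {z : ℂ} (hz : z ∈ uD) : 0 ≤ zygS a f z :=
  mul_nonneg (Real.rpow_nonneg (one_sub_norm_sq_pos hz).le _) (norm_nonneg _)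

lemma sSup_zygS_nonneg (a : ℝ) (f : ℂ → ℂ) : 0 ≤ sSup (zygS a f '' uD) :=
  Real.sSup_nonneg (by rintro _ ⟨z, hz, rfl⟩; exact zygS_nonneg a f hz)

lemma zygS_le_sSup (hf : memZ a f) {z : ℂ} (hz : z ∈ uD) : zygS a f z ≤ sSup (zygS a f '' uD) := by
  obtain ⟨-, M, hM⟩ := hf
  exact le_csSup ⟨M, by rintro _ ⟨z, hz, rfl⟩; exact hM z hz⟩ (mem_image_of_mem _ hz)

lemma zNorm_nonneg (a : ℝ) (f : ℂ → ℂ) : 0 ≤ zNorm a f := by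
  have := sSup_zygS_nonneg a f
  unfold zNorm
  positivity

lemma norm_deriv_zero_le_zNorm (a : ℝ) (f : ℂ → ℂ) : ‖deriv f 0‖ ≤ zNorm a f := by
  have := sSup_zygS_nonneg a f
  unfold zNorm
  linarith [norm_nonneg (f 0)]

lemma zygS_le_zNorm (hf : memZ a f) {z : ℂ} (hz : z ∈ uD) : zygS a f z ≤ zNorm a f := by
  have := zygS_le_sSup hf hz
  unfold zNorm
  linarith [norm_nonneg (f 0), norm_nonneg (deriv f 0)]

lemma zNorm_le {C₀ C₁ C₂ : ℝ} (h₀ : ‖f 0‖ ≤ C₀) (h₁ : ‖deriv f 0‖ ≤ C₁) (hC₂ : 0 ≤ C₂)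
    (h₂ : ∀ z ∈ uD, zygS a f z ≤ C₂) : zNorm a f ≤ C₀ + C₁ + C₂ := by
  have : sSup (zygS a f '' uD) ≤ C₂ := Real.sSup_le (by rintro _ ⟨z, hz, rfl⟩; exact h₂ z hz) hC₂
  unfold zNorm
  linarith

lemma norm_deriv_deriv_le_zNorm (hf : memZ a f) {z : ℂ} (hz : z ∈ uD) :
    ‖deriv (deriv f) z‖ ≤ zNorm a f * (1 - ‖z‖ ^ 2) ^ (-a) := by
  have hx := Real.rpow_pos_of_pos (one_sub_norm_sq_pos hz) a
  rw [Real.rpow_neg (one_sub_norm_sq_pos hz).le, ← div_eq_mul_inv, le_div_iff₀ hx, mul_comm]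
  exact zygS_le_zNorm hf hz

end ZygmundNorm

lemma norm_sub_le_of_norm_deriv_le_rpow {E : Type*} [NormedAddCommGroup E] [NormedSpace ℝ E]
    {h h' : ℝ → E} {r M γ : ℝ} (hr : 0 ≤ r) (hr1 : r < 1) (hγ : 1 < γ)
    (hh : ∀ t ∈ Icc (0 : ℝ) 1, HasDerivAt h (h' t) t)
    (hbound : ∀ t ∈ Icc (0 : ℝ) 1, ‖h' t‖ ≤ M * r * (1 - t * r) ^ (-γ)) :
    ‖h 1 - h 0‖ ≤ M / (γ - 1) * ((1 - r) ^ (1 - γ) - 1) := by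
  set B : ℝ → ℝ := fun t => M / (γ - 1) * ((1 - t * r) ^ (1 - γ) - 1)
  have hB : ∀ t ∈ Icc (0 : ℝ) 1, HasDerivAt B (M * r * (1 - t * r) ^ (-γ)) t := by
    intro t ht
    have hpos : 0 < 1 - t * r := by nlinarith [ht.1, ht.2]
    have := (((hasDerivAt_id t).mul_const r).const_sub 1).rpow_const (p := 1 - γ) (.inl hpos.ne')
    refine ((this.sub_const 1).const_mul (M / (γ - 1))).congr_deriv ?_
    rw [show 1 - γ - 1 = -γ by ring, id_eq]
    field_simp [(by linarith : γ - 1 ≠ 0)]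
    ring
  have key := image_norm_le_of_norm_deriv_right_le_deriv_boundary' (f := fun t => h t - h 0)
    (a := 0) (b := 1) (f' := h') (B := B) (B' := fun t => M * r * (1 - t * r) ^ (-γ))
    (fun t ht => (hh t ht).continuousAt.continuousWithinAt.sub continuousWithinAt_const)
    (fun t ht => ((hh t (Ico_subset_Icc_self ht)).sub_const (h 0)).hasDerivWithinAt)
    (by simp [B]) (fun t ht => (hB t ht).continuousAt.continuousWithinAt)
    (fun t ht => (hB t (Ico_subset_Icc_self ht)).hasDerivWithinAt)
    (fun t ht => hbound t (Ico_subset_Icc_self ht)) (right_mem_Icc.2 zero_le_one)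
  simpa [B] using key

lemma one_sub_rpow_le_two_rpow_mul {r γ : ℝ} (hr : 0 ≤ r) (hr1 : r < 1) (hγ : 1 ≤ γ) :
    (1 - r) ^ (1 - γ) ≤ 2 ^ (γ - 1) * (1 - r ^ 2) ^ (1 - γ) := by
  have hle : (1 - r ^ 2) ^ (1 - γ) ≥ (2 * (1 - r)) ^ (1 - γ) :=
    Real.rpow_le_rpow_of_nonpos (by nlinarith) (by nlinarith) (by linarith)
  rw [Real.mul_rpow zero_le_two (by linarith)] at hle
  calc (1 - r) ^ (1 - γ) = 2 ^ (γ - 1) * (2 ^ (1 - γ) * (1 - r) ^ (1 - γ)) := by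
        rw [← mul_assoc, ← Real.rpow_add zero_lt_two]; norm_num
    _ ≤ 2 ^ (γ - 1) * (1 - r ^ 2) ^ (1 - γ) := by gcongr

lemma norm_mul_deriv_deriv_le {α : ℝ} (hα : 0 ≤ α) {f : ℂ → ℂ} (hf : memZ α f) {w : ℂ}
    (hw : w ∈ uD) {t : ℝ} (ht : t ∈ Icc (0 : ℝ) 1) :
    ‖w * deriv (deriv f) (t * w)‖ ≤ zNorm α f * ‖w‖ * (1 - t * ‖w‖) ^ (-α) := by
  have htw : 0 ≤ t * ‖w‖ := mul_nonneg ht.1 (norm_nonneg w)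
  have htw1 : t * ‖w‖ < 1 :=
    (mul_le_of_le_one_left (norm_nonneg w) ht.2).trans_lt (mem_uD.1 hw)
  have hweight : (1 - (t * ‖w‖) ^ 2) ^ (-α) ≤ (1 - t * ‖w‖) ^ (-α) :=
    Real.rpow_le_rpow_of_nonpos (by linarith) (by nlinarith) (by linarith)
  have hnorm : ‖(t : ℂ) * w‖ = t * ‖w‖ := by
    rw [norm_mul, Complex.norm_real, Real.norm_of_nonneg ht.1]
  calc ‖w * deriv (deriv f) (t * w)‖ ≤ ‖w‖ * (zNorm α f * (1 - (t * ‖w‖) ^ 2) ^ (-α)) := by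
        rw [norm_mul, ← hnorm]
        gcongr
        exact norm_deriv_deriv_le_zNorm hf (ofReal_mul_mem_uD hw ht)
    _ ≤ zNorm α f * ‖w‖ * (1 - t * ‖w‖) ^ (-α) := by
        rw [mul_left_comm, mul_assoc]
        gcongr
        exact zNorm_nonneg α f

theorem norm_deriv_le_zNorm {α : ℝ} (hα : 1 < α) {f : ℂ → ℂ} (hf : memZ α f) {w : ℂ}
    (hw : w ∈ uD) :
    ‖deriv f w‖ ≤ (1 + 2 ^ (α - 1) / (α - 1)) * zNorm α f * (1 - ‖w‖ ^ 2) ^ (1 - α) := by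
  set r := ‖w‖
  set N := zNorm α f
  have hr1 : r < 1 := mem_uD.1 hw
  have hN := zNorm_nonneg α f
  have hderiv : ∀ t ∈ Icc (0 : ℝ) 1, HasDerivAt (fun t : ℝ => deriv f (t * w))
      (w * deriv (deriv f) (t * w)) t := by
    intro t ht
    have hf' := (hf.analyticOnNhd.deriv _ (ofReal_mul_mem_uD hw ht)).differentiableAt.hasDerivAt
    simpa [mul_comm] using (hf'.comp (t : ℂ) ((hasDerivAt_id _).mul_const w)).comp_ofReal
  have hdiff := norm_sub_le_of_norm_deriv_le_rpow (norm_nonneg w) hr1 hα hderiv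
    fun t ht => norm_mul_deriv_deriv_le (by linarith) hf hw ht
  simp only [Complex.ofReal_one, Complex.ofReal_zero, one_mul, zero_mul] at hdiff
  have hweight : 1 ≤ (1 - r ^ 2) ^ (1 - α) :=
    Real.one_le_rpow_of_pos_of_le_one_of_nonpos (by nlinarith [norm_nonneg w])
      (by nlinarith [norm_nonneg w]) (by linarith)
  calc ‖deriv f w‖ ≤ ‖deriv f 0‖ + N / (α - 1) * ((1 - r) ^ (1 - α) - 1) :=
        (norm_le_norm_add_norm_sub' _ (deriv f 0)).trans (by linarith)
    _ ≤ N + N / (α - 1) * (2 ^ (α - 1) * (1 - r ^ 2) ^ (1 - α)) := by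
        have : 0 ≤ N / (α - 1) := div_nonneg hN (by linarith)
        gcongr
        · exact norm_deriv_zero_le_zNorm α f
        · linarith [one_sub_rpow_le_two_rpow_mul (norm_nonneg w) hr1 hα.le]
    _ ≤ N * (1 - r ^ 2) ^ (1 - α) + N / (α - 1) * (2 ^ (α - 1) * (1 - r ^ 2) ^ (1 - α)) := by
        gcongr
        exact le_mul_of_one_le_right hN hweight
    _ = (1 + 2 ^ (α - 1) / (α - 1)) * N * (1 - r ^ 2) ^ (1 - α) := by ring

lemma integral_mul_comp_ofReal_mul_eq_sub {F u : ℂ → ℂ} {z : ℂ}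
    (hF : ∀ t ∈ Icc (0 : ℝ) 1, HasDerivAt F (u (t * z)) (t * z))
    (hu : ContinuousOn (fun t : ℝ => u (t * z)) (Icc 0 1)) :
    ∫ t in (0 : ℝ)..1, z * u (t * z) = F z - F 0 := by
  rw [← uIcc_of_le zero_le_one] at hF hu
  have hderiv : ∀ t ∈ uIcc (0 : ℝ) 1, HasDerivAt (fun t : ℝ => F (t * z)) (z * u (t * z)) t :=
    fun t ht => by
      simpa [mul_comm] using ((hF t ht).comp (t : ℂ) ((hasDerivAt_id _).mul_const z)).comp_ofReal
  rw [intervalIntegral.integral_eq_sub_of_hasDerivAt hderiv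
    (continuousOn_const.mul hu).intervalIntegrable]
  simp

/-- The coefficient of `f'' ∘ φ` in `(C_φ V_g f)''`. -/
def coeffFpp (g φ : ℂ → ℂ) (z : ℂ) : ℂ := g (φ z) * (deriv φ z) ^ 2

/-- The coefficient of `f' ∘ φ` in `(C_φ V_g f)''`. -/
def coeffFp (g φ : ℂ → ℂ) (z : ℂ) : ℂ :=
  deriv g (φ z) * (deriv φ z) ^ 2 + g (φ z) * deriv (deriv φ) z

section Operator

variable {f g φ : ℂ → ℂ} (hf : AnalyticOnNhd ℂ f uD) (hg : AnalyticOnNhd ℂ g uD)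
  (hφ : AnalyticOnNhd ℂ φ uD) (hφm : MapsTo φ uD uD)
include hf hg hφm

lemma exists_CphiVg_eq_sub : ∃ F : ℂ → ℂ, (∀ w ∈ uD, HasDerivAt F (deriv f w * g w) w) ∧
    ∀ z ∈ uD, CphiVg g φ f z = F (φ z) - F 0 := by
  have hu : AnalyticOnNhd ℂ (fun w => deriv f w * g w) uD := hf.deriv.mul hg
  obtain ⟨F, hF⟩ := hu.differentiableOn.isExactOn_ball
  refine ⟨F, hF, fun z hz => integral_mul_comp_ofReal_mul_eq_sub (u := fun w => deriv f w * g w)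
    (fun t ht => hF _ (ofReal_mul_mem_uD (hφm hz) ht)) ?_⟩
  exact hu.continuousOn.comp (by fun_prop) fun t ht => ofReal_mul_mem_uD (hφm hz) ht

include hφ

lemma hasDerivAt_CphiVg {z : ℂ} (hz : z ∈ uD) :
    HasDerivAt (CphiVg g φ f) (deriv f (φ z) * g (φ z) * deriv φ z) z := by
  obtain ⟨F, hF, hT⟩ := exists_CphiVg_eq_sub hf hg hφm
  have hφz := (hφ z hz).differentiableAt.hasDerivAt
  refine ((hF _ (hφm hz)).comp z hφz |>.sub_const (F 0)).congr_of_eventuallyEq ?_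
  exact eventually_of_mem (isOpen_uD.mem_nhds hz) hT

lemma analyticOnNhd_CphiVg : AnalyticOnNhd ℂ (CphiVg g φ f) uD :=
  DifferentiableOn.analyticOnNhd (fun _ hz =>
    (hasDerivAt_CphiVg hf hg hφ hφm hz).differentiableAt.differentiableWithinAt) isOpen_uD

lemma deriv_deriv_CphiVg {z : ℂ} (hz : z ∈ uD) :
    deriv (deriv (CphiVg g φ f)) z =
      deriv (deriv f) (φ z) * coeffFpp g φ z + deriv f (φ z) * coeffFp g φ z := by
  have hderiv : deriv (CphiVg g φ f) =ᶠ[nhds z] fun z => deriv f (φ z) * g (φ z) * deriv φ z :=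
    eventually_of_mem (isOpen_uD.mem_nhds hz) fun w hw => (hasDerivAt_CphiVg hf hg hφ hφm hw).deriv
  have hf' := (hf.deriv _ (hφm hz)).differentiableAt.hasDerivAt
  have hg' := (hg _ (hφm hz)).differentiableAt.hasDerivAt
  have hφ' := (hφ z hz).differentiableAt.hasDerivAt
  have hφ'' := (hφ.deriv z hz).differentiableAt.hasDerivAt
  have h2 : HasDerivAt (fun z => deriv f (φ z) * g (φ z) * deriv φ z) _ z :=
    ((hf'.mul hg').comp z hφ').mul hφ''
  rw [hderiv.deriv_eq, h2.deriv, coeffFpp, coeffFp, Function.comp_apply, Pi.mul_apply]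
  ring

end Operator

section Sufficiency

variable {α β : ℝ} {g φ : ℂ → ℂ}

lemma zygS_CphiVg_le (hα : 1 < α) (hg : AnalyticOnNhd ℂ g uD) (hφ : AnalyticOnNhd ℂ φ uD)
    (hφm : MapsTo φ uD uD) {M₁ M₂ : ℝ}
    (h₁ : ∀ z ∈ uD, (1 - ‖z‖ ^ 2) ^ β * ‖coeffFpp g φ z‖ ≤ M₁ * (1 - ‖φ z‖ ^ 2) ^ α)
    (h₂ : ∀ z ∈ uD, (1 - ‖z‖ ^ 2) ^ β * ‖coeffFp g φ z‖ ≤ M₂ * (1 - ‖φ z‖ ^ 2) ^ (α - 1))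
    {f : ℂ → ℂ} (hf : memZ α f) {z : ℂ} (hz : z ∈ uD) :
    zygS β (CphiVg g φ f) z ≤ zNorm α f * (M₁ + (1 + 2 ^ (α - 1) / (α - 1)) * M₂) := by
  set K := 1 + 2 ^ (α - 1) / (α - 1)
  have hw := hφm hz
  have hx := one_sub_norm_sq_pos hw
  have hs : 0 ≤ (1 - ‖z‖ ^ 2) ^ β := (Real.rpow_pos_of_pos (one_sub_norm_sq_pos hz) β).le
  calc zygS β (CphiVg g φ f) z
      ≤ ‖deriv (deriv f) (φ z)‖ * ((1 - ‖z‖ ^ 2) ^ β * ‖coeffFpp g φ z‖)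
        + ‖deriv f (φ z)‖ * ((1 - ‖z‖ ^ 2) ^ β * ‖coeffFp g φ z‖) := by
        rw [zygS, deriv_deriv_CphiVg hf.analyticOnNhd hg hφ hφm hz]
        refine (mul_le_mul_of_nonneg_left (norm_add_le _ _) hs).trans_eq ?_
        rw [norm_mul, norm_mul]
        ring
    _ ≤ zNorm α f * (1 - ‖φ z‖ ^ 2) ^ (-α) * (M₁ * (1 - ‖φ z‖ ^ 2) ^ α)
        + K * zNorm α f * (1 - ‖φ z‖ ^ 2) ^ (1 - α) * (M₂ * (1 - ‖φ z‖ ^ 2) ^ (α - 1)) := by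
        have hN := zNorm_nonneg α f
        have hK : 0 ≤ K := add_nonneg zero_le_one (div_nonneg (by positivity) (by linarith))
        exact add_le_add
          (mul_le_mul (norm_deriv_deriv_le_zNorm hf hw) (h₁ z hz)
            (mul_nonneg hs (norm_nonneg _)) (mul_nonneg hN (Real.rpow_nonneg hx.le _)))
          (mul_le_mul (norm_deriv_le_zNorm hα hf hw) (h₂ z hz)
            (mul_nonneg hs (norm_nonneg _)) (by positivity))
    _ = zNorm α f * (M₁ + K * M₂) := by
        have e₁ := Real.rpow_add hx (-α) α
        have e₂ := Real.rpow_add hx (1 - α) (α - 1)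
        simp only [neg_add_cancel, sub_add_sub_cancel, sub_self, Real.rpow_zero] at e₁ e₂
        linear_combination (zNorm α f * M₁) * e₁.symm + (K * zNorm α f * M₂) * e₂.symm

lemma exists_norm_deriv_mul_le_on_closedBall (hα : 1 < α) (hg : AnalyticOnNhd ℂ g uD) {r : ℝ}
    (hr₀ : 0 ≤ r) (hr : r < 1) : ∃ c ≥ 0, ∀ f, memZ α f → ∀ w ∈ closedBall (0 : ℂ) r,
      ‖deriv f w * g w‖ ≤ c * zNorm α f := by
  obtain ⟨G, hG⟩ := (isCompact_closedBall (0 : ℂ) r).exists_bound_of_continuousOn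
    (hg.continuousOn.mono (closedBall_subset_ball hr))
  set K := 1 + 2 ^ (α - 1) / (α - 1)
  have hK : 0 ≤ K := add_nonneg zero_le_one (div_nonneg (by positivity) (by linarith))
  have hx : 0 < 1 - r ^ 2 := by nlinarith
  refine ⟨K * (1 - r ^ 2) ^ (1 - α) * |G|, by positivity, fun f hf w hw => ?_⟩
  have hw' : ‖w‖ ≤ r := mem_closedBall_zero_iff.1 hw
  have hweight : (1 - ‖w‖ ^ 2) ^ (1 - α) ≤ (1 - r ^ 2) ^ (1 - α) :=
    Real.rpow_le_rpow_of_nonpos (by nlinarith [norm_nonneg w]) (by nlinarith [norm_nonneg w])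
      (by linarith)
  have hKN := mul_nonneg hK (zNorm_nonneg α f)
  rw [norm_mul]
  calc ‖deriv f w‖ * ‖g w‖ ≤ (K * zNorm α f * (1 - r ^ 2) ^ (1 - α)) * |G| :=
        mul_le_mul ((norm_deriv_le_zNorm hα hf (closedBall_subset_ball hr hw)).trans
            (mul_le_mul_of_nonneg_left hweight hKN)) ((hG w hw).trans (le_abs_self G))
          (norm_nonneg _) (mul_nonneg hKN (by positivity))
    _ = K * (1 - r ^ 2) ^ (1 - α) * |G| * zNorm α f := by ring

lemma exists_norm_CphiVg_zero_add_le (hα : 1 < α) (hg : AnalyticOnNhd ℂ g uD)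
    (hφ : AnalyticOnNhd ℂ φ uD) (hφm : MapsTo φ uD uD) : ∃ c ≥ 0, ∀ f, memZ α f →
      ‖CphiVg g φ f 0‖ + ‖deriv (CphiVg g φ f) 0‖ ≤ c * zNorm α f := by
  have hφ0 : ‖φ 0‖ < 1 := mem_uD.1 (hφm zero_mem_uD)
  have hmem : φ 0 ∈ closedBall (0 : ℂ) ‖φ 0‖ := mem_closedBall_zero_iff.2 le_rfl
  obtain ⟨c, hc, hnear⟩ := exists_norm_deriv_mul_le_on_closedBall hα hg (norm_nonneg _) hφ0
  refine ⟨c * (1 + ‖deriv φ 0‖), by positivity, fun f hf => ?_⟩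
  have hcN := mul_nonneg hc (zNorm_nonneg α f)
  obtain ⟨F, hF, hT⟩ := exists_CphiVg_eq_sub hf.analyticOnNhd hg hφm
  have hT₀ : ‖CphiVg g φ f 0‖ ≤ c * zNorm α f := by
    rw [hT 0 zero_mem_uD]
    refine ((convex_closedBall 0 _).norm_image_sub_le_of_norm_hasDerivWithin_le
      (fun w hw => (hF w (closedBall_subset_ball hφ0 hw)).hasDerivWithinAt) (hnear f hf)
      (mem_closedBall_self (norm_nonneg _)) hmem).trans ?_
    rw [sub_zero]
    exact mul_le_of_le_one_right hcN hφ0.le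
  have hT₁ : ‖deriv (CphiVg g φ f) 0‖ ≤ c * zNorm α f * ‖deriv φ 0‖ := by
    rw [(hasDerivAt_CphiVg hf.analyticOnNhd hg hφ hφm zero_mem_uD).deriv, norm_mul]
    gcongr
    exact hnear f hf _ hmem
  linarith

theorem boundedOp_CphiVg_of_bounds (hα : 1 < α) (hg : AnalyticOnNhd ℂ g uD)
    (hφ : AnalyticOnNhd ℂ φ uD) (hφm : MapsTo φ uD uD) {M₁ M₂ : ℝ}
    (h₁ : ∀ z ∈ uD, (1 - ‖z‖ ^ 2) ^ β * ‖coeffFpp g φ z‖ / (1 - ‖φ z‖ ^ 2) ^ α ≤ M₁)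
    (h₂ : ∀ z ∈ uD, (1 - ‖z‖ ^ 2) ^ β * ‖coeffFp g φ z‖ / (1 - ‖φ z‖ ^ 2) ^ (α - 1) ≤ M₂) :
    boundedOp α β (CphiVg g φ) := by
  have hpos (z : ℂ) (hz : z ∈ uD) (γ : ℝ) : 0 < (1 - ‖φ z‖ ^ 2) ^ γ :=
    Real.rpow_pos_of_pos (one_sub_norm_sq_pos (hφm hz)) γ
  have h₁' (z : ℂ) (hz : z ∈ uD) := (div_le_iff₀ (hpos z hz _)).1 ((h₁ z hz).trans (le_abs_self M₁))
  have h₂' (z : ℂ) (hz : z ∈ uD) := (div_le_iff₀ (hpos z hz _)).1 ((h₂ z hz).trans (le_abs_self M₂))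
  have hzyg (f : ℂ → ℂ) (hf : memZ α f) (z : ℂ) (hz : z ∈ uD) :=
    zygS_CphiVg_le hα hg hφ hφm h₁' h₂' hf hz
  obtain ⟨c, hc, h₀⟩ := exists_norm_CphiVg_zero_add_le hα hg hφ hφm
  set K := 1 + 2 ^ (α - 1) / (α - 1)
  have hK : 0 ≤ K := add_nonneg zero_le_one (div_nonneg (by positivity) (by linarith))
  refine ⟨fun f hf => ⟨(analyticOnNhd_CphiVg hf.analyticOnNhd hg hφ hφm).analyticOn, _,
    hzyg f hf⟩, c + |M₁| + K * |M₂| + 1, by positivity, fun f hf => ?_⟩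
  have hN := zNorm_nonneg α f
  calc zNorm β (CphiVg g φ f)
      ≤ ‖CphiVg g φ f 0‖ + ‖deriv (CphiVg g φ f) 0‖ + zNorm α f * (|M₁| + K * |M₂|) :=
        zNorm_le le_rfl le_rfl (by positivity) (hzyg f hf)
    _ ≤ (c + |M₁| + K * |M₂| + 1) * zNorm α f := by nlinarith [h₀ f hf]

end Sufficiency

section TestFunctions

variable {a : ℝ}

lemma memZ_id : memZ a (fun z : ℂ => z) :=
  ⟨analyticOn_id, 0, fun z _ => by simp [zygS]⟩

lemma zNorm_id_le : zNorm a (fun z : ℂ => z) ≤ 1 := by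
  simpa using zNorm_le (a := a) (f := fun z : ℂ => z) (C₀ := 0) (C₁ := 1) (C₂ := 0)
    (by simp) (by simp) le_rfl (fun z _ => by simp [zygS])

lemma deriv_half_sq : deriv (fun z : ℂ => z ^ 2 / 2) = fun z => z :=
  funext fun z => by rw [((hasDerivAt_pow 2 z).div_const 2).deriv]; ring

lemma zygS_half_sq_le_one (ha : 0 ≤ a) {z : ℂ} (hz : z ∈ uD) :
    zygS a (fun z : ℂ => z ^ 2 / 2) z ≤ 1 := by
  simp only [zygS, deriv_half_sq, deriv_id'', norm_one, mul_one]
  exact Real.rpow_le_one (one_sub_norm_sq_pos hz).le (by nlinarith [norm_nonneg z]) ha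

lemma memZ_half_sq (ha : 0 ≤ a) : memZ a (fun z : ℂ => z ^ 2 / 2) :=
  ⟨(analyticOn_id.pow 2).div_const, 1, fun _ hz => zygS_half_sq_le_one ha hz⟩

lemma zNorm_half_sq_le (ha : 0 ≤ a) : zNorm a (fun z : ℂ => z ^ 2 / 2) ≤ 1 := by
  simpa using zNorm_le (a := a) (f := fun z : ℂ => z ^ 2 / 2) (C₀ := 0) (C₁ := 0) (C₂ := 1)
    (by simp) (by simp) zero_le_one (fun _ hz => zygS_half_sq_le_one ha hz)

end TestFunctions

lemma one_sub_norm_sq_le_two_mul_norm_one_sub_mul {a b : ℂ} (ha : ‖a‖ ≤ 1) :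
    1 - ‖b‖ ^ 2 ≤ 2 * ‖1 - a * b‖ := by
  have h := norm_sub_norm_le (1 : ℂ) (a * b)
  rw [norm_one, norm_mul] at h
  nlinarith [norm_nonneg a, norm_nonneg b, sq_nonneg (1 - ‖b‖)]

lemma rpow_mul_rpow_neg_le {s t x α e : ℝ} (hs : 0 ≤ s) (hx : 0 < x) (hst : s ≤ 2 * t)
    (hxt : x ≤ 2 * t) (hα : 0 ≤ α) (hαe : α ≤ e) : s ^ α * t ^ (-e) ≤ 2 ^ e * x ^ (α - e) := by
  have ht : 0 < t := by linarith
  calc s ^ α * t ^ (-e) ≤ (2 * t) ^ α * t ^ (-e) :=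
        mul_le_mul_of_nonneg_right (Real.rpow_le_rpow hs hst hα) (Real.rpow_nonneg ht.le _)
    _ = 2 ^ α * t ^ (α - e) := by
        rw [Real.mul_rpow zero_le_two ht.le, mul_assoc, ← Real.rpow_add ht, ← sub_eq_add_neg]
    _ ≤ 2 ^ α * (x / 2) ^ (α - e) := mul_le_mul_of_nonneg_left
        (Real.rpow_le_rpow_of_nonpos (by positivity) (by linarith) (by linarith)) (by positivity)
    _ = 2 ^ e * x ^ (α - e) := by
        rw [Real.div_rpow hx.le zero_le_two, mul_div_assoc', div_eq_mul_inv, mul_right_comm,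
          ← Real.rpow_neg zero_le_two, ← Real.rpow_add zero_lt_two]
        ring_nf

def powKernel (w : ℂ) (c : ℝ) (z : ℂ) : ℂ := (1 - conj w * z) ^ (-(c : ℂ))

section PowKernel

variable {w z : ℂ} {c : ℝ}

lemma one_sub_conj_mul_mem_slitPlane (hw : w ∈ uD) (hz : z ∈ uD) :
    1 - conj w * z ∈ Complex.slitPlane := by
  rw [sub_eq_add_neg]
  apply Complex.mem_slitPlane_of_norm_lt_one
  rw [norm_neg, norm_mul, Complex.norm_conj]
  nlinarith [mem_uD.1 hw, mem_uD.1 hz, norm_nonneg w, norm_nonneg z]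

lemma hasDerivAt_powKernel (hw : w ∈ uD) (hz : z ∈ uD) :
    HasDerivAt (powKernel w c) (c * conj w * powKernel w (c + 1) z) z := by
  have h := (((hasDerivAt_id z).const_mul (conj w)).const_sub 1).cpow_const (c := -(c : ℂ))
    (one_sub_conj_mul_mem_slitPlane hw hz)
  refine h.congr_deriv ?_
  rw [powKernel, show -(c : ℂ) - 1 = -((c + 1 : ℝ) : ℂ) by push_cast; ring]
  simp only [id, mul_one]
  ring

lemma deriv_powKernel (hw : w ∈ uD) (hz : z ∈ uD) :
    deriv (powKernel w c) z = c * conj w * powKernel w (c + 1) z :=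
  (hasDerivAt_powKernel hw hz).deriv

lemma deriv_deriv_powKernel (hw : w ∈ uD) (hz : z ∈ uD) :
    deriv (deriv (powKernel w c)) z = c * (c + 1) * conj w ^ 2 * powKernel w (c + 2) z := by
  have h : deriv (powKernel w c) =ᶠ[nhds z] fun z => c * conj w * powKernel w (c + 1) z :=
    eventually_of_mem (isOpen_uD.mem_nhds hz) fun _ hz => deriv_powKernel hw hz
  rw [h.deriv_eq, ((hasDerivAt_powKernel hw hz).const_mul _).deriv, show c + 1 + 1 = c + 2 by ring]
  push_cast
  ring

lemma norm_powKernel : ‖powKernel w c z‖ = ‖1 - conj w * z‖ ^ (-c) := by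
  rw [powKernel, ← Complex.ofReal_neg, Complex.norm_cpow_real]

lemma powKernel_self (hw : w ∈ uD) : powKernel w c w = ((1 - ‖w‖ ^ 2) ^ (-c) : ℝ) := by
  have h : 1 - conj w * w = ((1 - ‖w‖ ^ 2 : ℝ) : ℂ) := by
    rw [mul_comm, Complex.mul_conj, Complex.normSq_eq_norm_sq]
    push_cast
    ring
  rw [powKernel, h, ← Complex.ofReal_neg, ← Complex.ofReal_cpow (one_sub_norm_sq_pos hw).le]

variable {α : ℝ}

lemma zygS_powKernel_le (hα : 0 ≤ α) (hc : 0 ≤ c) (hcα : α ≤ c + 2) (hw : w ∈ uD) (hz : z ∈ uD) :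
    zygS α (powKernel w c) z ≤ c * (c + 1) * 2 ^ (c + 2) * (1 - ‖w‖ ^ 2) ^ (α - (c + 2)) := by
  have hw1 : ‖conj w‖ ≤ 1 := by rw [Complex.norm_conj]; exact (mem_uD.1 hw).le
  have hz1 : ‖z‖ ≤ 1 := (mem_uD.1 hz).le
  have hdist₁ := one_sub_norm_sq_le_two_mul_norm_one_sub_mul (b := z) hw1
  have hdist₂ := one_sub_norm_sq_le_two_mul_norm_one_sub_mul (a := z) (b := conj w) hz1
  rw [Complex.norm_conj, mul_comm z] at hdist₂
  rw [zygS, deriv_deriv_powKernel hw hz, norm_mul, norm_powKernel, norm_mul, norm_pow,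
    Complex.norm_conj]
  have hk := rpow_mul_rpow_neg_le (one_sub_norm_sq_pos hz).le (one_sub_norm_sq_pos hw) hdist₁
    hdist₂ hα hcα
  have hcoef : ‖(c : ℂ) * (c + 1)‖ * ‖w‖ ^ 2 ≤ c * (c + 1) := by
    rw [show (c : ℂ) * (c + 1) = ((c * (c + 1) : ℝ) : ℂ) by push_cast; ring, Complex.norm_real,
      Real.norm_of_nonneg (by positivity)]
    exact mul_le_of_le_one_right (by positivity) (pow_le_one₀ (norm_nonneg w) (mem_uD.1 hw).le)
  calc (1 - ‖z‖ ^ 2) ^ α * (‖(c : ℂ) * (c + 1)‖ * ‖w‖ ^ 2 * ‖1 - conj w * z‖ ^ (-(c + 2)))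
      = ‖(c : ℂ) * (c + 1)‖ * ‖w‖ ^ 2 * ((1 - ‖z‖ ^ 2) ^ α * ‖1 - conj w * z‖ ^ (-(c + 2))) := by
        ring
    _ ≤ c * (c + 1) * (2 ^ (c + 2) * (1 - ‖w‖ ^ 2) ^ (α - (c + 2))) :=
        mul_le_mul hcoef hk (mul_nonneg (Real.rpow_nonneg (one_sub_norm_sq_pos hz).le _)
          (Real.rpow_nonneg (norm_nonneg _) _)) (by positivity)
    _ = _ := by ring

end PowKernel

section PowKernelNorm

variable {w : ℂ} {c α : ℝ}

lemma memZ_powKernel (hα : 0 ≤ α) (hc : 0 ≤ c) (hcα : α ≤ c + 2) (hw : w ∈ uD) :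
    memZ α (powKernel w c) :=
  ⟨(DifferentiableOn.analyticOnNhd (fun _ hz => (hasDerivAt_powKernel hw hz).differentiableAt
    |>.differentiableWithinAt) isOpen_uD).analyticOn, _,
    fun _ hz => zygS_powKernel_le hα hc hcα hw hz⟩

lemma zNorm_powKernel_le (hα : 0 ≤ α) (hc : 0 ≤ c) (hcα : α ≤ c + 2) (hw : w ∈ uD) :
    zNorm α (powKernel w c) ≤
      (1 + c + c * (c + 1) * 2 ^ (c + 2)) * (1 - ‖w‖ ^ 2) ^ (α - (c + 2)) := by
  have hx := one_sub_norm_sq_pos hw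
  have hweight : 1 ≤ (1 - ‖w‖ ^ 2) ^ (α - (c + 2)) :=
    Real.one_le_rpow_of_pos_of_le_one_of_nonpos hx (by nlinarith [norm_nonneg w]) (by linarith)
  have h₀ : ‖powKernel w c 0‖ ≤ 1 := by simp [powKernel]
  have h₁ : ‖deriv (powKernel w c) 0‖ ≤ c := by
    rw [deriv_powKernel hw zero_mem_uD]
    simp only [powKernel, mul_zero, sub_zero, Complex.one_cpow, mul_one, norm_mul,
      Complex.norm_real, Real.norm_of_nonneg hc, Complex.norm_conj]
    exact mul_le_of_le_one_right hc (mem_uD.1 hw).le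
  refine (zNorm_le h₀ h₁ (by positivity) fun z hz => zygS_powKernel_le hα hc hcα hw hz).trans ?_
  nlinarith [show 0 ≤ c * (c + 1) * 2 ^ (c + 2) by positivity]

end PowKernelNorm

lemma norm_le_of_norm_two_combinations_le {u v : ℂ} {c L₁ L₂ : ℝ} (hc : 0 ≤ c)
    (h₁ : ‖(c + 1) * u + v‖ ≤ L₁) (h₂ : ‖(c + 2) * u + v‖ ≤ L₂) :
    ‖u‖ ≤ L₁ + L₂ ∧ ‖v‖ ≤ (c + 2) * L₁ + (c + 1) * L₂ := by
  have hn₁ : ‖(c : ℂ) + 1‖ = c + 1 := by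
    rw [show (c : ℂ) + 1 = ((c + 1 : ℝ) : ℂ) by push_cast; ring, Complex.norm_real,
      Real.norm_of_nonneg (by linarith)]
  have hn₂ : ‖(c : ℂ) + 2‖ = c + 2 := by
    rw [show (c : ℂ) + 2 = ((c + 2 : ℝ) : ℂ) by push_cast; ring, Complex.norm_real,
      Real.norm_of_nonneg (by linarith)]
  constructor
  · calc ‖u‖ = ‖((c + 2) * u + v) - ((c + 1) * u + v)‖ := by ring_nf
      _ ≤ L₁ + L₂ := (norm_sub_le _ _).trans (by linarith)
  · calc ‖v‖ = ‖(c + 2) * ((c + 1) * u + v) - (c + 1) * ((c + 2) * u + v)‖ := by ring_nf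
      _ ≤ (c + 2) * L₁ + (c + 1) * L₂ := by
        refine (norm_sub_le _ _).trans ?_
        rw [norm_mul, norm_mul, hn₁, hn₂]
        gcongr

lemma div_one_sub_sq_rpow_le_max {a r γ K L : ℝ} {k : ℕ} (ha : 0 ≤ a) (hr : 0 ≤ r) (hr1 : r < 1)
    (hγ : 0 ≤ γ) (hK : a ≤ K) (hL : r ^ k * a ≤ L * (1 - r ^ 2) ^ γ) :
    a / (1 - r ^ 2) ^ γ ≤ max (K / (3 / 4) ^ γ) (2 ^ k * L) := by
  have hx : 0 < (1 - r ^ 2) ^ γ := Real.rpow_pos_of_pos (by nlinarith) γ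
  rcases le_or_gt r (1 / 2) with hsmall | hbig
  · refine le_max_of_le_left (div_le_div₀ (ha.trans hK) hK (by positivity) ?_)
    exact Real.rpow_le_rpow (by norm_num) (by nlinarith) hγ
  · refine le_max_of_le_right ((div_le_iff₀ hx).2 ?_)
    calc a = 2 ^ k * ((1 / 2) ^ k * a) := by
          rw [← mul_assoc, ← mul_pow]; norm_num
      _ ≤ 2 ^ k * (r ^ k * a) := by gcongr
      _ ≤ 2 ^ k * (L * (1 - r ^ 2) ^ γ) := by gcongr
      _ = 2 ^ k * L * (1 - r ^ 2) ^ γ := by ring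

section Necessity

variable {α β C : ℝ} {g φ : ℂ → ℂ}

lemma exists_bound_of_boundedOp (hg : AnalyticOnNhd ℂ g uD) (hφ : AnalyticOnNhd ℂ φ uD)
    (hφm : MapsTo φ uD uD) (hb : boundedOp α β (CphiVg g φ)) :
    ∃ C ≥ 0, ∀ f, memZ α f → ∀ z ∈ uD, (1 - ‖z‖ ^ 2) ^ β *
      ‖deriv (deriv f) (φ z) * coeffFpp g φ z + deriv f (φ z) * coeffFp g φ z‖ ≤ C * zNorm α f := by
  obtain ⟨hmap, C, hC, hCb⟩ := hb
  refine ⟨C, hC.le, fun f hf z hz => ?_⟩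
  rw [← deriv_deriv_CphiVg hf.analyticOnNhd hg hφ hφm hz]
  exact (zygS_le_zNorm (hmap f hf) hz).trans (hCb f hf)

variable (hC : 0 ≤ C) (hφm : MapsTo φ uD uD)
  (hkey : ∀ f, memZ α f → ∀ z ∈ uD, (1 - ‖z‖ ^ 2) ^ β *
    ‖deriv (deriv f) (φ z) * coeffFpp g φ z + deriv f (φ z) * coeffFp g φ z‖ ≤ C * zNorm α f)
include hkey

include hC in
lemma weighted_norm_coeffFp_le {z : ℂ} (hz : z ∈ uD) :
    (1 - ‖z‖ ^ 2) ^ β * ‖coeffFp g φ z‖ ≤ C := by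
  simpa using (hkey _ memZ_id z hz).trans (mul_le_of_le_one_right hC zNorm_id_le)

include hC hφm in
lemma weighted_norm_coeffFpp_le (hα : 0 ≤ α) {z : ℂ} (hz : z ∈ uD) :
    (1 - ‖z‖ ^ 2) ^ β * ‖coeffFpp g φ z‖ ≤ 2 * C := by
  have hsq : (1 - ‖z‖ ^ 2) ^ β * ‖coeffFpp g φ z + φ z * coeffFp g φ z‖ ≤ C := by
    simpa [deriv_half_sq] using
      (hkey _ (memZ_half_sq hα) z hz).trans (mul_le_of_le_one_right hC (zNorm_half_sq_le hα))
  have hs : 0 ≤ (1 - ‖z‖ ^ 2) ^ β := (Real.rpow_pos_of_pos (one_sub_norm_sq_pos hz) β).le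
  have htri : ‖coeffFpp g φ z‖ ≤ ‖coeffFpp g φ z + φ z * coeffFp g φ z‖ + ‖coeffFp g φ z‖ := by
    calc ‖coeffFpp g φ z‖
        = ‖(coeffFpp g φ z + φ z * coeffFp g φ z) - φ z * coeffFp g φ z‖ := by ring_nf
      _ ≤ ‖coeffFpp g φ z + φ z * coeffFp g φ z‖ + ‖φ z‖ * ‖coeffFp g φ z‖ :=
        (norm_sub_le _ _).trans_eq (by rw [norm_mul])
      _ ≤ _ := by gcongr; exact mul_le_of_le_one_left (norm_nonneg _) (mem_uD.1 (hφm hz)).le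
  nlinarith [mul_le_mul_of_nonneg_left htri hs, weighted_norm_coeffFp_le hC hkey hz]

include hC hφm in
lemma weighted_norm_kernel_combination_le (hα : 0 ≤ α) {c : ℝ} (hc : 0 < c) (hcα : α ≤ c + 2)
    {z : ℂ} (hz : z ∈ uD) :
    (1 - ‖z‖ ^ 2) ^ β * ‖(c + 1) * (conj (φ z) ^ 2 * coeffFpp g φ z)
        + conj (φ z) * (1 - ‖φ z‖ ^ 2 : ℝ) * coeffFp g φ z‖
      ≤ C * (1 + c + c * (c + 1) * 2 ^ (c + 2)) / c * (1 - ‖φ z‖ ^ 2) ^ α := by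
  set w := φ z
  set x := 1 - ‖w‖ ^ 2 with hx_def
  set p := x ^ (-(c + 2)) with hp_def
  set Λ := 1 + c + c * (c + 1) * 2 ^ (c + 2)
  set E := (c + 1) * (conj w ^ 2 * coeffFpp g φ z) + conj w * (x : ℂ) * coeffFp g φ z
  have hw : w ∈ uD := hφm hz
  have hx : 0 < x := one_sub_norm_sq_pos hw
  have hp : 0 < p := Real.rpow_pos_of_pos hx _
  have h := hkey _ (memZ_powKernel hα hc.le hcα hw) z hz
  have hfactor : deriv (deriv (powKernel w c)) w * coeffFpp g φ z
      + deriv (powKernel w c) w * coeffFp g φ z = ((c * p : ℝ) : ℂ) * E := by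
    have hsplit : x ^ (-(c + 1)) = x * p := by
      rw [← Real.rpow_one_add' hx.le (by linarith)]
      ring_nf
    rw [deriv_deriv_powKernel hw hw, deriv_powKernel hw hw, powKernel_self hw, powKernel_self hw,
      ← hx_def, ← hp_def, hsplit]
    push_cast
    ring
  rw [hfactor, norm_mul, Complex.norm_real, Real.norm_of_nonneg (by positivity)] at h
  have hnorm : zNorm α (powKernel w c) ≤ Λ * (x ^ α * p) := by
    rw [← Real.rpow_add hx, ← sub_eq_add_neg]
    exact zNorm_powKernel_le hα hc.le hcα hw
  calc (1 - ‖z‖ ^ 2) ^ β * ‖E‖ = (1 - ‖z‖ ^ 2) ^ β * (c * p * ‖E‖) / (c * p) := by field_simp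
    _ ≤ C * (Λ * (x ^ α * p)) / (c * p) :=
        div_le_div_of_nonneg_right (h.trans (mul_le_mul_of_nonneg_left hnorm hC)) (by positivity)
    _ = C * Λ / c * x ^ α := by field_simp

include hC hφm hkey in
lemma exists_boundary_bounds (hα : 0 < α) : ∃ L, ∀ z ∈ uD,
    ‖φ z‖ ^ 2 * ((1 - ‖z‖ ^ 2) ^ β * ‖coeffFpp g φ z‖) ≤ L * (1 - ‖φ z‖ ^ 2) ^ α ∧
    ‖φ z‖ * ((1 - ‖z‖ ^ 2) ^ β * ‖coeffFp g φ z‖) ≤ L * (1 - ‖φ z‖ ^ 2) ^ (α - 1) := by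
  set L₁ := C * (1 + α + α * (α + 1) * 2 ^ (α + 2)) / α
  set L₂ := C * (1 + (α + 1) + (α + 1) * (α + 1 + 1) * 2 ^ (α + 1 + 2)) / (α + 1)
  have hL₁ : 0 ≤ L₁ := by positivity
  have hL₂ : 0 ≤ L₂ := by positivity
  refine ⟨L₁ + L₂ + ((α + 2) * L₁ + (α + 1) * L₂), fun z hz => ?_⟩
  set w := φ z
  set x := 1 - ‖w‖ ^ 2
  set s := (1 - ‖z‖ ^ 2) ^ β
  have hx : 0 < x := one_sub_norm_sq_pos (hφm hz)
  have hs : 0 ≤ s := (Real.rpow_pos_of_pos (one_sub_norm_sq_pos hz) β).le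
  have hxα : 0 ≤ x ^ α := (Real.rpow_pos_of_pos hx α).le
  set u := conj w ^ 2 * coeffFpp g φ z
  set v := conj w * (x : ℂ) * coeffFp g φ z
  have h₁ : s * ‖(α + 1) * u + v‖ ≤ L₁ * x ^ α :=
    weighted_norm_kernel_combination_le hC hφm hkey hα.le hα (by linarith) hz
  have h₂ : s * ‖(α + 2) * u + v‖ ≤ L₂ * x ^ α := by
    have h := weighted_norm_kernel_combination_le hC hφm hkey hα.le (c := α + 1) (by linarith)
      (by linarith) hz
    rwa [show ((α + 1 : ℝ) : ℂ) + 1 = α + 2 by push_cast; ring] at h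
  obtain ⟨hu, hv⟩ := norm_le_of_norm_two_combinations_le hα.le le_rfl le_rfl (u := u) (v := v)
  have hnu : ‖u‖ = ‖w‖ ^ 2 * ‖coeffFpp g φ z‖ := by simp [u]
  have hnv : ‖v‖ = ‖w‖ * x * ‖coeffFp g φ z‖ := by
    simp [v, Complex.norm_real, Real.norm_of_nonneg hx.le]
  have hsu := mul_le_mul_of_nonneg_left hu hs
  have hsv := mul_le_mul_of_nonneg_left hv hs
  rw [hnu] at hsu
  rw [hnv] at hsv
  have hrest : 0 ≤ ((α + 2) * L₁ + (α + 1) * L₂) * x ^ α := by positivity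
  constructor
  · nlinarith
  · have hsplit : x ^ α = x ^ (α - 1) * x := by
      rw [← Real.rpow_add_one hx.ne']; ring_nf
    refine le_of_mul_le_mul_right ?_ hx
    rw [mul_assoc (L₁ + L₂ + _), ← hsplit]
    have : 0 ≤ (L₁ + L₂) * x ^ α := by positivity
    nlinarith [mul_le_mul_of_nonneg_left h₁ (by linarith : (0 : ℝ) ≤ α + 2),
      mul_le_mul_of_nonneg_left h₂ (by linarith : (0 : ℝ) ≤ α + 1)]

end Necessity

theorem bounds_of_boundedOp_CphiVg {α β : ℝ} (hα : 1 < α) {g φ : ℂ → ℂ}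
    (hg : AnalyticOnNhd ℂ g uD) (hφ : AnalyticOnNhd ℂ φ uD) (hφm : MapsTo φ uD uD)
    (hb : boundedOp α β (CphiVg g φ)) :
    (∃ M : ℝ, ∀ z ∈ uD, (1 - ‖z‖ ^ 2) ^ β * ‖coeffFpp g φ z‖ / (1 - ‖φ z‖ ^ 2) ^ α ≤ M) ∧
      ∃ M : ℝ, ∀ z ∈ uD,
        (1 - ‖z‖ ^ 2) ^ β * ‖coeffFp g φ z‖ / (1 - ‖φ z‖ ^ 2) ^ (α - 1) ≤ M := by
  obtain ⟨C, hC, hkey⟩ := exists_bound_of_boundedOp hg hφ hφm hb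
  obtain ⟨L, hL⟩ := exists_boundary_bounds hC hφm hkey (by linarith)
  have hs (z : ℂ) (hz : z ∈ uD) : 0 ≤ (1 - ‖z‖ ^ 2) ^ β :=
    (Real.rpow_pos_of_pos (one_sub_norm_sq_pos hz) β).le
  refine ⟨⟨_, fun z hz => div_one_sub_sq_rpow_le_max (k := 2) ?_ (norm_nonneg _)
      (mem_uD.1 (hφm hz)) (by linarith) (weighted_norm_coeffFpp_le hC hφm hkey (by linarith) hz)
      (hL z hz).1⟩,
    ⟨_, fun z hz => div_one_sub_sq_rpow_le_max (k := 1) ?_ (norm_nonneg _)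
      (mem_uD.1 (hφm hz)) (by linarith) (weighted_norm_coeffFp_le hC hkey hz)
      (by simpa using (hL z hz).2)⟩⟩
  · exact mul_nonneg (hs z hz) (norm_nonneg _)
  · exact mul_nonneg (hs z hz) (norm_nonneg _)

theorem stmt_5_general (α β : ℝ) (hα : 1 < α)
    (φ g : ℂ → ℂ) (hφ : AnalyticOn ℂ φ uD) (hφm : Set.MapsTo φ uD uD)
    (hg : AnalyticOn ℂ g uD) :
    boundedOp α β (CphiVg g φ) ↔
      ((∃ M : ℝ, ∀ z ∈ uD, (1 - ‖z‖ ^ 2) ^ β * ‖g (φ z) * (deriv φ z) ^ 2‖ / (1 - ‖φ z‖ ^ 2) ^ α ≤ M) ∧ (∃ M : ℝ, ∀ z ∈ uD, (1 - ‖z‖ ^ 2) ^ β * ‖deriv g (φ z) * (deriv φ z) ^ 2 + g (φ z) * deriv (deriv φ) z‖ / (1 - ‖φ z‖ ^ 2) ^ (α - 1) ≤ M)) := by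
  have hφ' := isOpen_uD.analyticOn_iff_analyticOnNhd.1 hφ
  have hg' := isOpen_uD.analyticOn_iff_analyticOnNhd.1 hg
  exact ⟨bounds_of_boundedOp_CphiVg hα hg' hφ' hφm,
    fun ⟨⟨_, h₁⟩, ⟨_, h₂⟩⟩ => boundedOp_CphiVg_of_bounds hα hg' hφ' hφm h₁ h₂⟩

theorem stmt_5 (α β : ℝ) (hα : 1 < α) (hβ : 0 < β)
    (φ g : ℂ → ℂ) (hφ : AnalyticOn ℂ φ uD) (hφm : Set.MapsTo φ uD uD)
    (hg : AnalyticOn ℂ g uD) :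
    boundedOp α β (CphiVg g φ) ↔
      ((∃ M : ℝ, ∀ z ∈ uD, (1 - ‖z‖ ^ 2) ^ β * ‖g (φ z) * (deriv φ z) ^ 2‖ / (1 - ‖φ z‖ ^ 2) ^ α ≤ M) ∧ (∃ M : ℝ, ∀ z ∈ uD, (1 - ‖z‖ ^ 2) ^ β * ‖deriv g (φ z) * (deriv φ z) ^ 2 + g (φ z) * deriv (deriv φ) z‖ / (1 - ‖φ z‖ ^ 2) ^ (α - 1) ≤ M)) :=
  stmt_5_general α β hα φ g hφ hφm hg
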